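/- The Morley form morl(f1,f2) ∈ B ⊗_A B is invariant under the involution τ exchanging X_i with Y_i (i = 1,2), and consequently τ maps the bihomogeneous component morl_{p,q}(f1,f2) to morl_{q,p}(f1,f2) for every pair (p,q) with p + q = δ. -/
import Mathlib


open MvPolynomial

namespace Stmt4Aux

variable {A : Type*} [CommRing A]

lemma weight_mapDomain {α β : Type*} (e : α → β) (w : β → ℕ) (u : α →₀ ℕ) :
    Finsupp.weight w (Finsupp.mapDomain e u) = Finsupp.weight (w ∘ e) u := by
  classical
  exact Finsupp.linearCombination_mapDomain (R := ℕ) (v' := w) e u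

noncomputable def eplus : MvPolynomial (Fin 4) A →ₐ[A] MvPolynomial (Fin 4) A :=
  aeval ![X 0 + X 2, X 1 + X 3, X 2, X 3]

noncomputable def eminus : MvPolynomial (Fin 4) A →ₐ[A] MvPolynomial (Fin 4) A :=
  aeval ![X 0 - X 2, X 1 - X 3, X 2, X 3]

lemma eminus_eplus (f : MvPolynomial (Fin 4) A) : eminus (eplus f) = f := by
  have h : (eminus (A := A)).comp eplus = AlgHom.id A _ := by
    apply MvPolynomial.algHom_ext
    intro i
    fin_cases i <;> simp [eplus, eminus]
  calc eminus (eplus f) = (eminus.comp eplus) f := rfl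
    _ = f := by rw [h]; rfl

lemma syz_X (p q : MvPolynomial (Fin 4) A) (h : X 0 * p + X 1 * q = 0) :
    ∃ c, p = X 1 * c ∧ q = -(X 0 * c) := by
  classical
  set c := MvPolynomial.divMonomial p (Finsupp.single 1 1) with hc
  set r := MvPolynomial.modMonomial p (Finsupp.single 1 1) with hrdef
  have hp : X 1 * c + r = p := MvPolynomial.divMonomial_add_modMonomial_single p 1
  have hrcoeff : ∀ m : Fin 4 →₀ ℕ, m 1 ≠ 0 → coeff m r = 0 := by
    intro m hm
    exact MvPolynomial.coeff_modMonomial_of_le p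
      (Finsupp.single_le_iff.mpr (Nat.one_le_iff_ne_zero.mpr hm))
  have h2 : X 0 * r = -(X 1 * (q + X 0 * c)) := by linear_combination h + X 0 * hp
  have hr0 : r = 0 := by
    ext m
    rw [coeff_zero]
    by_cases hm : m 1 = 0
    · have e1 : coeff m r = coeff (Finsupp.single 0 1 + m) (X 0 * r) :=
        (coeff_X_mul m 0 r).symm
      rw [e1, h2, coeff_neg, coeff_X_mul']
      have h' : (1 : Fin 4) ∉ (Finsupp.single (0:Fin 4) 1 + m).support := by
        simp [Finsupp.mem_support_iff, Finsupp.add_apply, Finsupp.single_apply, hm]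
      rw [if_neg h', neg_zero]
    · exact hrcoeff m hm
  have hp' : p = X 1 * c := by rw [← hp, hr0, add_zero]
  have hq : X 1 * q = X 1 * (-(X 0 * c)) := by linear_combination h - X 0 * hp'
  exact ⟨c, hp', (MvPolynomial.isRegular_X (n := (1 : Fin 4))).left hq⟩

lemma syz (p q : MvPolynomial (Fin 4) A)
    (h : (X 0 - X 2) * p + (X 1 - X 3) * q = 0) :
    ∃ c, p = (X 1 - X 3) * c ∧ q = -((X 0 - X 2) * c) := by
  have hX0 : eplus (A := A) (X 0 - X 2) = X 0 := by simp [eplus]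
  have hX1 : eplus (A := A) (X 1 - X 3) = X 1 := by simp [eplus]
  have hY0 : eminus (A := A) (X 0) = X 0 - X 2 := by simp [eminus]
  have hY1 : eminus (A := A) (X 1) = X 1 - X 3 := by simp [eminus]
  have h' : X 0 * eplus p + X 1 * eplus q = 0 := by
    have h0 := congrArg eplus h
    rw [map_add, map_mul, map_mul, hX0, hX1, map_zero] at h0
    exact h0
  obtain ⟨c, h1, h2⟩ := syz_X _ _ h'
  refine ⟨eminus c, ?_, ?_⟩
  · have h3 := congrArg eminus h1
    rw [eminus_eplus, map_mul, hY1] at h3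
    exact h3
  · have h3 := congrArg eminus h2
    rw [eminus_eplus, map_neg, map_mul, hY0] at h3
    exact h3

lemma key (g1 g2 a11 a12 a21 a22 b11 b12 b21 b22 : MvPolynomial (Fin 4) A)
    (ha1 : g1 = (X 0 - X 2) * a11 + (X 1 - X 3) * a12)
    (ha2 : g2 = (X 0 - X 2) * a21 + (X 1 - X 3) * a22)
    (hb1 : g1 = (X 0 - X 2) * b11 + (X 1 - X 3) * b12)
    (hb2 : g2 = (X 0 - X 2) * b21 + (X 1 - X 3) * b22) :
    ∃ l1 l2, a11 * a22 - a12 * a21 - (b11 * b22 - b12 * b21) = l1 * g2 - l2 * g1 := by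
  obtain ⟨l1, e11, e12⟩ := syz (a11 - b11) (a12 - b12) (by linear_combination hb1 - ha1)
  obtain ⟨l2, e21, e22⟩ := syz (a21 - b21) (a22 - b22) (by linear_combination hb2 - ha2)
  exact ⟨l1, l2, by
    linear_combination a22 * e11 - a21 * e12 + b11 * e22 - b12 * e21 - l1 * ha2 + l2 * hb1⟩

lemma comp_mul_left (w : Fin 4 → ℕ) (F x : MvPolynomial (Fin 4) A) (m e : ℕ)
    (hF : F.IsWeightedHomogeneous w m) :
    weightedHomogeneousComponent w (m + e) (F * x)
      = F * weightedHomogeneousComponent w e x := by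
  classical
  have hfin := weightedHomogeneousComponent_finsupp (w := w) x
  have hx : x = ∑ i ∈ hfin.toFinset, weightedHomogeneousComponent w i x := by
    rw [← finsum_eq_sum _ hfin, sum_weightedHomogeneousComponent]
  conv_lhs => rw [hx]
  rw [Finset.mul_sum, map_sum]
  have hterm : ∀ i ∈ hfin.toFinset,
      weightedHomogeneousComponent w (m + e) (F * weightedHomogeneousComponent w i x)
        = if i = e then F * weightedHomogeneousComponent w i x else 0 := by
    intro i _
    have hhom : (F * weightedHomogeneousComponent w i x).IsWeightedHomogeneous w (m + i) :=
      hF.mul (weightedHomogeneousComponent_isWeightedHomogeneous i x)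
    by_cases hie : i = e
    · subst hie; rw [if_pos rfl]; exact hhom.weightedHomogeneousComponent_same
    · rw [if_neg hie]
      exact hhom.weightedHomogeneousComponent_ne _ (by omega)
  rw [Finset.sum_congr rfl hterm, Finset.sum_ite_eq' hfin.toFinset e]
  split_ifs with he
  · rfl
  · have h0 : weightedHomogeneousComponent w e x = 0 := by
      by_contra hne
      exact he (hfin.mem_toFinset.mpr hne)
    rw [h0, mul_zero]

lemma comp_mul_mem (w : Fin 4 → ℕ) (F x : MvPolynomial (Fin 4) A) (m n : ℕ)
    (hF : F.IsWeightedHomogeneous w m) :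
    weightedHomogeneousComponent w n (x * F) ∈ Ideal.span {F} := by
  classical
  have hfin := weightedHomogeneousComponent_finsupp (w := w) x
  have hx : x = ∑ i ∈ hfin.toFinset, weightedHomogeneousComponent w i x := by
    rw [← finsum_eq_sum _ hfin, sum_weightedHomogeneousComponent]
  rw [show x * F = ∑ i ∈ hfin.toFinset, weightedHomogeneousComponent w i x * F from by
    rw [← Finset.sum_mul, ← hx], map_sum]
  apply Ideal.sum_mem
  intro i _
  have hhom : (weightedHomogeneousComponent w i x * F).IsWeightedHomogeneous w (i + m) :=
    (weightedHomogeneousComponent_isWeightedHomogeneous i x).mul hF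
  by_cases hn : n = i + m
  · rw [hn, hhom.weightedHomogeneousComponent_same]
    exact Ideal.mul_mem_left _ _ (Ideal.subset_span rfl)
  · rw [hhom.weightedHomogeneousComponent_ne n hn]
    exact Ideal.zero_mem _

lemma comp_span_mem (w : Fin 4 → ℕ) (a b c d z : MvPolynomial (Fin 4) A)
    (ma mb mc md : ℕ)
    (ha : a.IsWeightedHomogeneous w ma) (hb : b.IsWeightedHomogeneous w mb)
    (hc : c.IsWeightedHomogeneous w mc) (hd : d.IsWeightedHomogeneous w md)
    (hz : z ∈ Ideal.span {a, b, c, d}) (n : ℕ) :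
    weightedHomogeneousComponent w n z ∈ Ideal.span {a, b, c, d} := by
  obtain ⟨r1, z1, hz1, rfl⟩ := Submodule.mem_span_insert.mp hz
  obtain ⟨r2, z2, hz2, rfl⟩ := Submodule.mem_span_insert.mp hz1
  obtain ⟨r3, z3, hz3, rfl⟩ := Submodule.mem_span_insert.mp hz2
  obtain ⟨r4, hr4⟩ := Ideal.mem_span_singleton'.mp hz3
  rw [← hr4]
  simp only [smul_eq_mul, map_add]
  have sub1 : Ideal.span {a} ≤ Ideal.span {a, b, c, d} := Ideal.span_mono (by simp)
  have sub2 : Ideal.span {b} ≤ Ideal.span {a, b, c, d} := Ideal.span_mono (by simp)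
  have sub3 : Ideal.span {c} ≤ Ideal.span {a, b, c, d} := Ideal.span_mono (by simp)
  have sub4 : Ideal.span {d} ≤ Ideal.span {a, b, c, d} := Ideal.span_mono (by simp)
  exact Ideal.add_mem _ (sub1 (comp_mul_mem w a r1 ma n ha))
    (Ideal.add_mem _ (sub2 (comp_mul_mem w b r2 mb n hb))
      (Ideal.add_mem _ (sub3 (comp_mul_mem w c r3 mc n hc))
        (sub4 (comp_mul_mem w d r4 md n hd))))

lemma comp_rename (e : Fin 4 → Fin 4) (he : Function.Involutive e) (w : Fin 4 → ℕ) (n : ℕ)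
    (z : MvPolynomial (Fin 4) A) :
    rename e (weightedHomogeneousComponent (w ∘ e) n z)
      = weightedHomogeneousComponent w n (rename e z) := by
  classical
  ext m
  obtain ⟨u, rfl⟩ : ∃ u, Finsupp.mapDomain e u = m :=
    ⟨Finsupp.mapDomain e m, by rw [← Finsupp.mapDomain_comp, he.comp_self, Finsupp.mapDomain_id]⟩
  rw [coeff_rename_mapDomain _ he.injective, coeff_weightedHomogeneousComponent,
    coeff_weightedHomogeneousComponent, coeff_rename_mapDomain _ he.injective, weight_mapDomain]

lemma isWH_rename (w : Fin 4 → ℕ) (e : Fin 2 → Fin 4) (f : MvPolynomial (Fin 2) A) (m : ℕ)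
    (hf : f.IsWeightedHomogeneous (w ∘ e) m) : (rename e f).IsWeightedHomogeneous w m := by
  intro d hd
  obtain ⟨u, hu, hc⟩ := coeff_rename_ne_zero _ _ _ hd
  rw [← hu, weight_mapDomain]
  exact hf hc

lemma isWH_zero_weight {n : ℕ} (f : MvPolynomial (Fin n) A) :
    f.IsWeightedHomogeneous (0 : Fin n → ℕ) 0 := by
  intro d _
  simp [Finsupp.weight_apply]

lemma isWH_sub {σ' : Type*} {w : σ' → ℕ} {f g : MvPolynomial σ' A} {m : ℕ}
    (hf : f.IsWeightedHomogeneous w m) (hg : g.IsWeightedHomogeneous w m) :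
    (f - g).IsWeightedHomogeneous w m := by
  rw [← mem_weightedHomogeneousSubmodule] at hf hg ⊢
  exact sub_mem hf hg

lemma weight_explicit (w : Fin 4 → ℕ) (m : Fin 4 →₀ ℕ) :
    Finsupp.weight w m = m 0 * w 0 + m 1 * w 1 + m 2 * w 2 + m 3 * w 3 := by
  rw [Finsupp.weight_apply, Finsupp.sum_fintype _ _ (fun i => by simp), Fin.sum_univ_four]
  simp [mul_comm, smul_eq_mul]

lemma comp_comp (K : MvPolynomial (Fin 4) A) (δ p q : ℕ)
    (hK : K.IsWeightedHomogeneous (1 : Fin 4 → ℕ) δ) (hpq : p + q = δ) :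
    weightedHomogeneousComponent ![0,0,1,1] p K
      = weightedHomogeneousComponent ![1,1,0,0] q K := by
  classical
  ext m
  rw [coeff_weightedHomogeneousComponent, coeff_weightedHomogeneousComponent]
  by_cases h0 : coeff m K = 0
  · split_ifs <;> simp [h0]
  · have hδ := hK h0
    rw [weight_explicit] at hδ
    simp only [Pi.one_apply, mul_one] at hδ
    rw [weight_explicit, weight_explicit]
    have e1 : (![0,0,1,1] : Fin 4 → ℕ) 0 = 0 := rfl
    have e2 : (![0,0,1,1] : Fin 4 → ℕ) 1 = 0 := rfl
    have e3 : (![0,0,1,1] : Fin 4 → ℕ) 2 = 1 := rfl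
    have e4 : (![0,0,1,1] : Fin 4 → ℕ) 3 = 1 := rfl
    have f1 : (![1,1,0,0] : Fin 4 → ℕ) 0 = 1 := rfl
    have f2 : (![1,1,0,0] : Fin 4 → ℕ) 1 = 1 := rfl
    have f3 : (![1,1,0,0] : Fin 4 → ℕ) 2 = 0 := rfl
    have f4 : (![1,1,0,0] : Fin 4 → ℕ) 3 = 0 := rfl
    rw [e1, e2, e3, e4, f1, f2, f3, f4]
    split_ifs with h1 h2 h2
    · rfl
    · omega
    · omega
    · rfl

lemma refine_decomp (g a b : MvPolynomial (Fin 4) A) (e : ℕ)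
    (hg : g.IsWeightedHomogeneous (1 : Fin 4 → ℕ) (1 + e))
    (h : g = (X 0 - X 2) * a + (X 1 - X 3) * b) :
    g = (X 0 - X 2) * weightedHomogeneousComponent (1 : Fin 4 → ℕ) e a
      + (X 1 - X 3) * weightedHomogeneousComponent (1 : Fin 4 → ℕ) e b := by
  have hx0 : (X 0 - X 2 : MvPolynomial (Fin 4) A).IsWeightedHomogeneous (1 : Fin 4 → ℕ) 1 :=
    isWH_sub (isWeightedHomogeneous_X A _ 0) (isWeightedHomogeneous_X A _ 2)
  have hx1 : (X 1 - X 3 : MvPolynomial (Fin 4) A).IsWeightedHomogeneous (1 : Fin 4 → ℕ) 1 :=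
    isWH_sub (isWeightedHomogeneous_X A _ 1) (isWeightedHomogeneous_X A _ 3)
  calc g = weightedHomogeneousComponent (1 : Fin 4 → ℕ) (1 + e) g :=
        hg.weightedHomogeneousComponent_same.symm
    _ = _ := by
        rw [h, map_add, comp_mul_left _ _ _ 1 e hx0, comp_mul_left _ _ _ 1 e hx1]

lemma rename_eq_of_homog0 (f : MvPolynomial (Fin 2) A) (hf : f.IsHomogeneous 0)
    (e e' : Fin 2 → Fin 4) : rename e f = rename e' f := by
  have hC : f = C (coeff 0 f) := by
    ext m
    rw [coeff_C]
    by_cases hm : 0 = m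
    · rw [if_pos hm, ← hm]
    · rw [if_neg hm]
      by_contra hcoef
      apply hm
      have hw := hf hcoef
      symm
      ext i
      have hle := Finsupp.le_weight (1 : Fin 2 → ℕ) (s := i) one_ne_zero m
      rw [hw] at hle
      simpa using Nat.le_zero.mp hle
  rw [hC, rename_C, rename_C]

end Stmt4Aux

open Stmt4Aux

/-- The Morley form `morl(f1,f2) ∈ B ⊗_A B` is invariant under the
involution `τ` exchanging `X_i` with `Y_i`, and consequently `τ` maps the bihomogeneous
component `morl_{p,q}(f1,f2)` to `morl_{q,p}(f1,f2)` for every `(p,q)` with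
`p + q = δ = d1 + d2 − 2`.  Here `morl(f1,f2)` is the class of `det (h_{i,j})` for a
decomposition `f_i(X) − f_i(Y) = (X1−Y1) h_{i,1} + (X2−Y2) h_{i,2}`, the bidegree-(p,q)
component is extracted as the weighted homogeneous component of weight `(1,1,0,0)` in
degree `p`, and all equalities hold in `A[X,Y]/(f1(X),f2(X),f1(Y),f2(Y))`. -/
theorem stmt4 {A : Type*} [CommRing A] [Nontrivial A] (d1 d2 : ℕ)
    (f1 f2 : MvPolynomial (Fin 2) A)
    (hf1 : f1.IsHomogeneous d1) (hf2 : f2.IsHomogeneous d2)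
    (hreg : RingTheory.Sequence.IsRegular (MvPolynomial (Fin 2) A) [f1, f2])
    (F1X F2X F1Y F2Y : MvPolynomial (Fin 4) A)
    (hF1X : F1X = rename ![0, 1] f1) (hF2X : F2X = rename ![0, 1] f2)
    (hF1Y : F1Y = rename ![2, 3] f1) (hF2Y : F2Y = rename ![2, 3] f2)
    (h11 h12 h21 h22 : MvPolynomial (Fin 4) A)
    (hh1 : F1X - F1Y = (X 0 - X 2) * h11 + (X 1 - X 3) * h12)
    (hh2 : F2X - F2Y = (X 0 - X 2) * h21 + (X 1 - X 3) * h22) :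
    (rename ![2, 3, 0, 1] (h11 * h22 - h12 * h21) - (h11 * h22 - h12 * h21) ∈
        Ideal.span {F1X, F2X, F1Y, F2Y}) ∧
    ∀ p q : ℕ, p + q = d1 + d2 - 2 →
      rename ![2, 3, 0, 1]
          (weightedHomogeneousComponent ![1, 1, 0, 0] p (h11 * h22 - h12 * h21)) -
        weightedHomogeneousComponent ![1, 1, 0, 0] q (h11 * h22 - h12 * h21) ∈
        Ideal.span {F1X, F2X, F1Y, F2Y} := by
  classical
  have hinv : Function.Involutive (![2,3,0,1] : Fin 4 → Fin 4) := by
    intro i; fin_cases i <;> rfl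
  have hcompX : (![2,3,0,1] : Fin 4 → Fin 4) ∘ ![0,1] = ![2,3] := by
    funext i; fin_cases i <;> rfl
  have hcompY : (![2,3,0,1] : Fin 4 → Fin 4) ∘ ![2,3] = ![0,1] := by
    funext i; fin_cases i <;> rfl
  have hσF1X : rename ![2,3,0,1] F1X = F1Y := by rw [hF1X, hF1Y, rename_rename, hcompX]
  have hσF2X : rename ![2,3,0,1] F2X = F2Y := by rw [hF2X, hF2Y, rename_rename, hcompX]
  have hσF1Y : rename ![2,3,0,1] F1Y = F1X := by rw [hF1X, hF1Y, rename_rename, hcompY]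
  have hσF2Y : rename ![2,3,0,1] F2Y = F2X := by rw [hF2X, hF2Y, rename_rename, hcompY]
  have hσX0 : rename (![2,3,0,1] : Fin 4 → Fin 4) (X 0 : MvPolynomial (Fin 4) A) = X 2 := by
    rw [rename_X]; rfl
  have hσX1 : rename (![2,3,0,1] : Fin 4 → Fin 4) (X 1 : MvPolynomial (Fin 4) A) = X 3 := by
    rw [rename_X]; rfl
  have hσX2 : rename (![2,3,0,1] : Fin 4 → Fin 4) (X 2 : MvPolynomial (Fin 4) A) = X 0 := by
    rw [rename_X]; rfl
  have hσX3 : rename (![2,3,0,1] : Fin 4 → Fin 4) (X 3 : MvPolynomial (Fin 4) A) = X 1 := by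
    rw [rename_X]; rfl
  have mkdec : ∀ a b G G' : MvPolynomial (Fin 4) A,
      rename ![2,3,0,1] G = G' → rename ![2,3,0,1] G' = G →
      (G - G' = (X 0 - X 2) * a + (X 1 - X 3) * b) →
      (G - G' = (X 0 - X 2) * rename ![2,3,0,1] a + (X 1 - X 3) * rename ![2,3,0,1] b) := by
    intro a b G G' hG hG' hdec
    have h0 := congrArg (rename (![2,3,0,1] : Fin 4 → Fin 4)) hdec
    rw [map_sub, map_add, map_mul, map_mul, map_sub, map_sub, hG, hG',
      hσX0, hσX1, hσX2, hσX3] at h0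
    linear_combination -h0
  have hb1 := mkdec h11 h12 F1X F1Y hσF1X hσF1Y hh1
  have hb2 := mkdec h21 h22 F2X F2Y hσF2X hσF2Y hh2
  obtain ⟨l1, l2, hkey1⟩ := Stmt4Aux.key (F1X - F1Y) (F2X - F2Y)
    (rename ![2,3,0,1] h11) (rename ![2,3,0,1] h12)
    (rename ![2,3,0,1] h21) (rename ![2,3,0,1] h22)
    h11 h12 h21 h22 hb1 hb2 hh1 hh2
  have hg1J : F1X - F1Y ∈ Ideal.span {F1X, F2X, F1Y, F2Y} :=
    sub_mem (Ideal.subset_span (by simp)) (Ideal.subset_span (by simp))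
  have hg2J : F2X - F2Y ∈ Ideal.span {F1X, F2X, F1Y, F2Y} :=
    sub_mem (Ideal.subset_span (by simp)) (Ideal.subset_span (by simp))
  constructor
  · have hσD : rename (![2,3,0,1] : Fin 4 → Fin 4) (h11 * h22 - h12 * h21)
        - (h11 * h22 - h12 * h21)
        = l1 * (F2X - F2Y) - l2 * (F1X - F1Y) := by
      rw [map_sub, map_mul, map_mul]
      linear_combination hkey1
    rw [hσD]
    exact sub_mem (Ideal.mul_mem_left _ _ hg2J) (Ideal.mul_mem_left _ _ hg1J)
  · intro p q hpq
    -- construct a totally homogeneous second decomposition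
    have hexk : ∃ k11 k12 k21 k22 : MvPolynomial (Fin 4) A,
        (F1X - F1Y = (X 0 - X 2) * k11 + (X 1 - X 3) * k12) ∧
        (F2X - F2Y = (X 0 - X 2) * k21 + (X 1 - X 3) * k22) ∧
        (k11 * k22 - k12 * k21).IsWeightedHomogeneous (1 : Fin 4 → ℕ) (d1 + d2 - 2) := by
      by_cases hd1 : d1 = 0
      · subst hd1
        have hgz : F1X - F1Y = 0 := by
          rw [hF1X, hF1Y, rename_eq_of_homog0 f1 hf1 ![0,1] ![2,3], sub_self]
        refine ⟨0, 0, h21, h22, by rw [hgz]; ring, hh2, ?_⟩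
        have h0 : (0 : MvPolynomial (Fin 4) A) * h22 - 0 * h21 = 0 := by ring
        rw [h0]
        exact isWeightedHomogeneous_zero _ _ _
      · by_cases hd2 : d2 = 0
        · subst hd2
          have hgz : F2X - F2Y = 0 := by
            rw [hF2X, hF2Y, rename_eq_of_homog0 f2 hf2 ![0,1] ![2,3], sub_self]
          refine ⟨h11, h12, 0, 0, hh1, by rw [hgz]; ring, ?_⟩
          have h0 : h11 * 0 - h12 * (0 : MvPolynomial (Fin 4) A) = 0 := by ring
          rw [h0]
          exact isWeightedHomogeneous_zero _ _ _
        · obtain ⟨e1, rfl⟩ := Nat.exists_eq_succ_of_ne_zero hd1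
          obtain ⟨e2, rfl⟩ := Nat.exists_eq_succ_of_ne_zero hd2
          have hg1hom : (F1X - F1Y).IsWeightedHomogeneous (1 : Fin 4 → ℕ) (1 + e1) := by
            rw [Nat.add_comm 1 e1]
            exact isWH_sub (by rw [hF1X]; exact hf1.rename_isHomogeneous)
              (by rw [hF1Y]; exact hf1.rename_isHomogeneous)
          have hg2hom : (F2X - F2Y).IsWeightedHomogeneous (1 : Fin 4 → ℕ) (1 + e2) := by
            rw [Nat.add_comm 1 e2]
            exact isWH_sub (by rw [hF2X]; exact hf2.rename_isHomogeneous)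
              (by rw [hF2Y]; exact hf2.rename_isHomogeneous)
          refine ⟨_, _, _, _, refine_decomp _ _ _ e1 hg1hom hh1,
            refine_decomp _ _ _ e2 hg2hom hh2, ?_⟩
          have hdeg : e1 + 1 + (e2 + 1) - 2 = e1 + e2 := by omega
          rw [hdeg]
          exact isWH_sub
            ((weightedHomogeneousComponent_isWeightedHomogeneous e1 h11).mul
              (weightedHomogeneousComponent_isWeightedHomogeneous e2 h22))
            ((weightedHomogeneousComponent_isWeightedHomogeneous e1 h12).mul
              (weightedHomogeneousComponent_isWeightedHomogeneous e2 h21))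
    obtain ⟨k11, k12, k21, k22, hk1, hk2, hKhom⟩ := hexk
    obtain ⟨m1, m2, hDK⟩ := Stmt4Aux.key (F1X - F1Y) (F2X - F2Y)
      h11 h12 h21 h22 k11 k12 k21 k22 hh1 hh2 hk1 hk2
    have hkb1 := mkdec k11 k12 F1X F1Y hσF1X hσF1Y hk1
    have hkb2 := mkdec k21 k22 F2X F2Y hσF2X hσF2Y hk2
    obtain ⟨n1, n2, hσKK⟩ := Stmt4Aux.key (F1X - F1Y) (F2X - F2Y)
      (rename ![2,3,0,1] k11) (rename ![2,3,0,1] k12)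
      (rename ![2,3,0,1] k21) (rename ![2,3,0,1] k22)
      k11 k12 k21 k22 hkb1 hkb2 hk1 hk2
    -- weighted homogeneity of the generators
    have hwX : (![1,1,0,0] : Fin 4 → ℕ) ∘ ![0,1] = 1 := by funext i; fin_cases i <;> rfl
    have hwY : (![1,1,0,0] : Fin 4 → ℕ) ∘ ![2,3] = 0 := by funext i; fin_cases i <;> rfl
    have hw'X : (![0,0,1,1] : Fin 4 → ℕ) ∘ ![0,1] = 0 := by funext i; fin_cases i <;> rfl
    have hw'Y : (![0,0,1,1] : Fin 4 → ℕ) ∘ ![2,3] = 1 := by funext i; fin_cases i <;> rfl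
    have HwF1X : F1X.IsWeightedHomogeneous ![1,1,0,0] d1 := by
      rw [hF1X]; exact isWH_rename _ _ _ _ (by rw [hwX]; exact hf1)
    have HwF2X : F2X.IsWeightedHomogeneous ![1,1,0,0] d2 := by
      rw [hF2X]; exact isWH_rename _ _ _ _ (by rw [hwX]; exact hf2)
    have HwF1Y : F1Y.IsWeightedHomogeneous ![1,1,0,0] 0 := by
      rw [hF1Y]; exact isWH_rename _ _ _ _ (by rw [hwY]; exact isWH_zero_weight f1)
    have HwF2Y : F2Y.IsWeightedHomogeneous ![1,1,0,0] 0 := by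
      rw [hF2Y]; exact isWH_rename _ _ _ _ (by rw [hwY]; exact isWH_zero_weight f2)
    have Hw'F1X : F1X.IsWeightedHomogeneous ![0,0,1,1] 0 := by
      rw [hF1X]; exact isWH_rename _ _ _ _ (by rw [hw'X]; exact isWH_zero_weight f1)
    have Hw'F2X : F2X.IsWeightedHomogeneous ![0,0,1,1] 0 := by
      rw [hF2X]; exact isWH_rename _ _ _ _ (by rw [hw'X]; exact isWH_zero_weight f2)
    have Hw'F1Y : F1Y.IsWeightedHomogeneous ![0,0,1,1] d1 := by
      rw [hF1Y]; exact isWH_rename _ _ _ _ (by rw [hw'Y]; exact hf1)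
    have Hw'F2Y : F2Y.IsWeightedHomogeneous ![0,0,1,1] d2 := by
      rw [hF2Y]; exact isWH_rename _ _ _ _ (by rw [hw'Y]; exact hf2)
    have hJcomp : ∀ z ∈ Ideal.span {F1X, F2X, F1Y, F2Y}, ∀ n,
        weightedHomogeneousComponent ![1,1,0,0] n z ∈ Ideal.span {F1X, F2X, F1Y, F2Y} :=
      fun z hz n => comp_span_mem _ _ _ _ _ z d1 d2 0 0 HwF1X HwF2X HwF1Y HwF2Y hz n
    have hJcomp' : ∀ z ∈ Ideal.span {F1X, F2X, F1Y, F2Y}, ∀ n,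
        weightedHomogeneousComponent ![0,0,1,1] n z ∈ Ideal.span {F1X, F2X, F1Y, F2Y} :=
      fun z hz n => comp_span_mem _ _ _ _ _ z 0 0 d1 d2 Hw'F1X Hw'F2X Hw'F1Y Hw'F2Y hz n
    have hσJ : ∀ z ∈ Ideal.span {F1X, F2X, F1Y, F2Y},
        rename (![2,3,0,1] : Fin 4 → Fin 4) z ∈ Ideal.span {F1X, F2X, F1Y, F2Y} := by
      intro z hz
      have hle : Ideal.map (rename (![2,3,0,1] : Fin 4 → Fin 4) :
            MvPolynomial (Fin 4) A →ₐ[A] MvPolynomial (Fin 4) A).toRingHom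
            (Ideal.span {F1X, F2X, F1Y, F2Y}) ≤ Ideal.span {F1X, F2X, F1Y, F2Y} := by
        rw [Ideal.map_span]
        refine Ideal.span_le.mpr ?_
        rintro _ ⟨x, hx, rfl⟩
        simp only [AlgHom.toRingHom_eq_coe, RingHom.coe_coe]
        simp only [Set.mem_insert_iff, Set.mem_singleton_iff] at hx
        rcases hx with rfl | rfl | rfl | rfl
        · rw [hσF1X]; exact Ideal.subset_span (by simp)
        · rw [hσF2X]; exact Ideal.subset_span (by simp)
        · rw [hσF1Y]; exact Ideal.subset_span (by simp)
        · rw [hσF2Y]; exact Ideal.subset_span (by simp)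
      exact hle (Ideal.mem_map_of_mem _ hz)
    have hwcomp : (![0,0,1,1] : Fin 4 → ℕ) ∘ ![2,3,0,1] = ![1,1,0,0] := by
      funext i; fin_cases i <;> rfl
    -- the chain of equalities
    have h1 : weightedHomogeneousComponent ![1,1,0,0] p (h11 * h22 - h12 * h21)
        = weightedHomogeneousComponent ![1,1,0,0] p (k11 * k22 - k12 * k21)
          + weightedHomogeneousComponent ![1,1,0,0] p
              (m1 * (F2X - F2Y) - m2 * (F1X - F1Y)) := by
      rw [← map_add]
      congr 1
      linear_combination hDK
    have h2 := congrArg (rename (![2,3,0,1] : Fin 4 → Fin 4)) h1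
    rw [map_add] at h2
    have h3 : rename (![2,3,0,1] : Fin 4 → Fin 4)
          (weightedHomogeneousComponent ![1,1,0,0] p (k11 * k22 - k12 * k21))
        = weightedHomogeneousComponent ![0,0,1,1] p (k11 * k22 - k12 * k21)
          + weightedHomogeneousComponent ![0,0,1,1] p
              (n1 * (F2X - F2Y) - n2 * (F1X - F1Y)) := by
      have e4 := comp_rename (A := A) ![2,3,0,1] hinv ![0,0,1,1] p (k11 * k22 - k12 * k21)
      rw [hwcomp] at e4
      rw [e4]
      have hσK : rename (![2,3,0,1] : Fin 4 → Fin 4) (k11 * k22 - k12 * k21)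
          = (k11 * k22 - k12 * k21) + (n1 * (F2X - F2Y) - n2 * (F1X - F1Y)) := by
        rw [map_sub, map_mul, map_mul]
        linear_combination hσKK
      rw [hσK, map_add]
    have h4 : weightedHomogeneousComponent ![0,0,1,1] p (k11 * k22 - k12 * k21)
        = weightedHomogeneousComponent ![1,1,0,0] q (k11 * k22 - k12 * k21) :=
      comp_comp _ (d1 + d2 - 2) p q hKhom hpq
    have h5 : weightedHomogeneousComponent ![1,1,0,0] q (h11 * h22 - h12 * h21)
        = weightedHomogeneousComponent ![1,1,0,0] q (k11 * k22 - k12 * k21)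
          + weightedHomogeneousComponent ![1,1,0,0] q
              (m1 * (F2X - F2Y) - m2 * (F1X - F1Y)) := by
      rw [← map_add]
      congr 1
      linear_combination hDK
    have main : rename (![2,3,0,1] : Fin 4 → Fin 4)
          (weightedHomogeneousComponent ![1,1,0,0] p (h11 * h22 - h12 * h21))
        - weightedHomogeneousComponent ![1,1,0,0] q (h11 * h22 - h12 * h21)
        = weightedHomogeneousComponent ![0,0,1,1] p (n1 * (F2X - F2Y) - n2 * (F1X - F1Y))
          + rename (![2,3,0,1] : Fin 4 → Fin 4)
              (weightedHomogeneousComponent ![1,1,0,0] p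
                (m1 * (F2X - F2Y) - m2 * (F1X - F1Y)))
          - weightedHomogeneousComponent ![1,1,0,0] q
              (m1 * (F2X - F2Y) - m2 * (F1X - F1Y)) := by
      linear_combination h2 + h3 + h4 - h5
    rw [main]
    have hrJ : m1 * (F2X - F2Y) - m2 * (F1X - F1Y) ∈ Ideal.span {F1X, F2X, F1Y, F2Y} :=
      sub_mem (Ideal.mul_mem_left _ _ hg2J) (Ideal.mul_mem_left _ _ hg1J)
    have hr'J : n1 * (F2X - F2Y) - n2 * (F1X - F1Y) ∈ Ideal.span {F1X, F2X, F1Y, F2Y} :=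
      sub_mem (Ideal.mul_mem_left _ _ hg2J) (Ideal.mul_mem_left _ _ hg1J)
    exact sub_mem (add_mem (hJcomp' _ hr'J p) (hσJ _ (hJcomp _ hrJ p)))
      (hJcomp _ hrJ q)
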